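/- Asymptotic validity of FRT with estimated assignment mechanism: let p(ψ) be Fisher's p-value computed with W^rep ~ f(W|X; ψ), assumed continuous in ψ at ψ₀, and let ψ̂ →_p ψ₀. If under the truth Pr(p(ψ₀) ≤ α') ≤ α' for all α' ∈ [0,1], then limsup_{n→∞} Pr(p(ψ̂) ≤ α) ≤ α for every α ∈ (0,1). -/

import Mathlib

open MeasureTheory Filter Topology

/-!
Along a subsequence of any subsequence `ψ̂ → ψ₀` almost surely, so by continuity
`p(ψ̂) → p(ψ₀)` almost surely there, and hence `p(ψ̂) → p(ψ₀)` in probability. Then for every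
`γ > 0` the event `p(ψ̂) ≤ α` lies in `{p(ψ₀) ≤ α + γ} ∪ {|p(ψ̂) - p(ψ₀)| ≥ γ}`, whence
`limsup Pr(p(ψ̂) ≤ α) ≤ Pr(p(ψ₀) ≤ α + γ) ≤ α + γ`; let `γ → 0`.
-/

namespace MeasureTheory

variable {Ω : Type*} [MeasurableSpace Ω] {μ : Measure Ω}

theorem TendstoInMeasure.comp_continuousAt {Ψ E : Type*} [PseudoEMetricSpace Ψ]
    [PseudoEMetricSpace E] [IsFiniteMeasure μ] {p : Ψ → Ω → E} {ψ : ℕ → Ω → Ψ} {ψ₀ : Ω → Ψ}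
    (h : TendstoInMeasure μ ψ atTop ψ₀)
    (hmeas : ∀ n, AEStronglyMeasurable (fun ω => p (ψ n ω) ω) μ)
    (hcont : ∀ᵐ ω ∂μ, ContinuousAt (fun x => p x ω) (ψ₀ ω)) :
    TendstoInMeasure μ (fun n ω => p (ψ n ω) ω) atTop (fun ω => p (ψ₀ ω) ω) := by
  rw [exists_seq_tendstoInMeasure_atTop_iff hmeas]
  intro ns hns
  obtain ⟨ns', hns', hae⟩ := (h.comp hns.tendsto_atTop).exists_seq_tendsto_ae
  refine ⟨ns', hns', ?_⟩
  filter_upwards [hae, hcont] with ω hψ hp using hp.tendsto.comp hψ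

theorem TendstoInMeasure.limsup_measure_le_le_add {ι : Type*} {l : Filter ι} [l.NeBot]
    {X : ι → Ω → ℝ} {Y : Ω → ℝ} (h : TendstoInMeasure μ X l Y) (α : ℝ) {γ : ℝ} (hγ : 0 < γ) :
    limsup (fun i => μ {ω | X i ω ≤ α}) l ≤ μ {ω | Y ω ≤ α + γ} := by
  have hsubset : ∀ i, {ω | X i ω ≤ α} ⊆ {ω | Y ω ≤ α + γ} ∪ {ω | γ ≤ dist (X i ω) (Y ω)} := by
    intro i ω hω
    by_contra! hout
    simp only [Set.mem_union, Set.mem_ofPred_eq, not_or, not_le, Real.dist_eq, abs_lt] at hω hout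
    linarith [hout.2.1]
  have hdev : Tendsto (fun i => μ {ω | Y ω ≤ α + γ} + μ {ω | γ ≤ dist (X i ω) (Y ω)}) l
      (𝓝 (μ {ω | Y ω ≤ α + γ})) := by
    simpa using (tendstoInMeasure_iff_dist.mp h γ hγ).const_add (μ {ω | Y ω ≤ α + γ})
  calc limsup (fun i => μ {ω | X i ω ≤ α}) l
      ≤ limsup (fun i => μ {ω | Y ω ≤ α + γ} + μ {ω | γ ≤ dist (X i ω) (Y ω)}) l :=
        limsup_le_limsup (Eventually.of_forall fun i =>
          (measure_mono (hsubset i)).trans (measure_union_le _ _))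
    _ = μ {ω | Y ω ≤ α + γ} := hdev.limsup_eq

end MeasureTheory

theorem stmt12_general
    {Ω Ψ : Type*} [MeasurableSpace Ω] [PseudoMetricSpace Ψ]
    (μ : Measure Ω) [IsProbabilityMeasure μ]
    (pfun : Ψ → Ω → ℝ) (ψ₀ : Ψ) (ψhat : ℕ → Ω → Ψ)
    (hmeas : ∀ n, Measurable (fun ω => pfun (ψhat n ω) ω))
    -- continuity of the p-value in ψ at ψ₀
    (hcont : ∀ ω, ContinuousAt (fun ψ => pfun ψ ω) ψ₀)
    -- consistency of the estimated assignment mechanism: ψ̂ →_p ψ₀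
    (hcons : TendstoInMeasure μ ψhat atTop (fun _ => ψ₀))
    -- validity at the truth
    (hvalid : ∀ α' ∈ Set.Icc (0 : ℝ) 1, μ {ω | pfun ψ₀ ω ≤ α'} ≤ ENNReal.ofReal α') :
    ∀ α ∈ Set.Ioo (0 : ℝ) 1,
      limsup (fun n => μ {ω | pfun (ψhat n ω) ω ≤ α}) atTop ≤ ENNReal.ofReal α := by
  intro α ⟨hα₀, hα₁⟩
  have hp : TendstoInMeasure μ (fun n ω => pfun (ψhat n ω) ω) atTop (fun ω => pfun ψ₀ ω) :=
    hcons.comp_continuousAt (fun n => (hmeas n).aestronglyMeasurable) (ae_of_all _ hcont)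
  have hbound : ∀ γ ∈ Set.Ioo 0 (1 - α),
      limsup (fun n => μ {ω | pfun (ψhat n ω) ω ≤ α}) atTop ≤ ENNReal.ofReal (α + γ) :=
    fun γ ⟨hγ₀, hγ₁⟩ => (hp.limsup_measure_le_le_add α hγ₀).trans
      (hvalid _ ⟨by linarith, by linarith⟩)
  have hlim : Tendsto (fun γ => ENNReal.ofReal (α + γ)) (𝓝[>] 0) (𝓝 (ENNReal.ofReal α)) :=
    ((ENNReal.continuous_ofReal.comp (continuous_const_add α)).tendsto' 0 _
      (by simp)).mono_left nhdsWithin_le_nhds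
  refine ge_of_tendsto hlim ?_
  filter_upwards [Ioo_mem_nhdsGT (sub_pos.mpr hα₁)] with γ hγ using hbound γ hγ

/-- Lemma 2: asymptotic validity of FRT with an estimated assignment mechanism.
`pfun ψ ω` is Fisher's p-value computed with `W^rep ~ f(W|X;ψ)` on the data `ω`; it is
continuous in `ψ` at `ψ₀`, the estimators `ψ̂_n` converge in probability to `ψ₀`, and at the
truth `Pr(p(ψ₀) ≤ α') ≤ α'` for all `α' ∈ [0,1]`.  Then
`limsup_n Pr(p(ψ̂_n) ≤ α) ≤ α` for every `α ∈ (0,1)`. -/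
theorem stmt12
    {Ω Ψ : Type*} [MeasurableSpace Ω] [PseudoMetricSpace Ψ] [MeasurableSpace Ψ]
    (μ : Measure Ω) [IsProbabilityMeasure μ]
    (pfun : Ψ → Ω → ℝ) (ψ₀ : Ψ) (ψhat : ℕ → Ω → Ψ)
    (hmeas : ∀ n, Measurable (fun ω => pfun (ψhat n ω) ω))
    (h01 : ∀ ψ ω, pfun ψ ω ∈ Set.Icc (0 : ℝ) 1)
    -- continuity of the p-value in ψ at ψ₀
    (hcont : ∀ ω, ContinuousAt (fun ψ => pfun ψ ω) ψ₀)
    -- consistency of the estimated assignment mechanism: ψ̂ →_p ψ₀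
    (hcons : TendstoInMeasure μ ψhat atTop (fun _ => ψ₀))
    -- validity at the truth
    (hvalid : ∀ α' ∈ Set.Icc (0 : ℝ) 1, μ {ω | pfun ψ₀ ω ≤ α'} ≤ ENNReal.ofReal α') :
    ∀ α ∈ Set.Ioo (0 : ℝ) 1,
      limsup (fun n => μ {ω | pfun (ψhat n ω) ω ≤ α}) atTop ≤ ENNReal.ofReal α :=
  stmt12_general μ pfun ψ₀ ψhat hmeas hcont hcons hvalid
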